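/- arXiv:1809.07440 — 2 statements merged into one kernel-verified Lean document; each statement's English description precedes it below -/
import Mathlib

section
/- Let X be a second-countable T0 topological space and Y ⊆ X a subspace such that Y is homeomorphic to a Π⁰₂ subspace of 𝕊^I for some (possibly uncountable) index set I. Then Y is a Π⁰₂ subset of X. -/
open TopologicalSpace Set Topology

/-- A Π⁰₂ set: a countable intersection of sets of the form (complement of open) ∪ open. -/
def IsPi02 {X : Type*} [TopologicalSpace X] (s : Set X) : Prop :=
  ∃ U V : ℕ → Set X, (∀ n, IsOpen (U n)) ∧ (∀ n, IsOpen (V n)) ∧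
    s = ⋂ n, ((U n)ᶜ ∪ V n)

/-- A quasi-Polish space: homeomorphic to a Π⁰₂ subspace of 𝕊^ℕ,
where 𝕊 is the Sierpiński space (`Prop` with its topology in Mathlib). -/
def QuasiPolish (X : Type*) [TopologicalSpace X] : Prop :=
  ∃ s : Set (ℕ → Prop), IsPi02 s ∧ Nonempty (X ≃ₜ s)

/-- Π⁰₂ sets are closed under binary intersection. -/
lemma IsPi02.inter' {X : Type*} [TopologicalSpace X] {s t : Set X}
    (hs : IsPi02 s) (ht : IsPi02 t) : IsPi02 (s ∩ t) := by
  obtain ⟨U1, V1, hU1, hV1, hseq⟩ := hs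
  obtain ⟨U2, V2, hU2, hV2, hteq⟩ := ht
  refine ⟨fun n => if Even n then U1 (n / 2) else U2 (n / 2),
    fun n => if Even n then V1 (n / 2) else V2 (n / 2), ?_, ?_, ?_⟩
  · intro n; dsimp only; split_ifs <;> [exact hU1 _; exact hU2 _]
  · intro n; dsimp only; split_ifs <;> [exact hV1 _; exact hV2 _]
  · ext x
    simp only [hseq, hteq, mem_inter_iff, mem_iInter]
    constructor
    · rintro ⟨h1, h2⟩ n
      by_cases hn : Even n <;> simp only [hn, if_true, if_false] <;>
        [exact h1 _; exact h2 _]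
    · intro hx
      constructor
      · intro m
        have := hx (2 * m)
        have he : Even (2 * m) := even_two_mul m
        have hd : 2 * m / 2 = m := by omega
        simpa [he, hd] using this
      · intro m
        have := hx (2 * m + 1)
        have he : ¬ Even (2 * m + 1) := by simp [Nat.even_add_one, parity_simps]
        have hd : (2 * m + 1) / 2 = m := by omega
        simpa [he, hd] using this

theorem isPi02_of_countably_correlated {X : Type*} [TopologicalSpace X]
    [SecondCountableTopology X] [T0Space X] (Y : Set X) (I : Type*)
    (s : Set (I → Prop)) (hs : IsPi02 s) (h : Nonempty (Y ≃ₜ s)) :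
    IsPi02 Y := by
  classical
  obtain ⟨A, C, hA, hC, hsEq⟩ := hs
  obtain ⟨f⟩ := h
  -- a countable family of open sets forming a basis (possibly with ∅ repeated)
  obtain ⟨b, hbc, hbne, hb⟩ := exists_countable_basis X
  obtain ⟨B, hBrange⟩ : ∃ B : ℕ → Set X, b ∪ {∅} = Set.range B :=
    (hbc.union (countable_singleton _)).exists_eq_range ⟨∅, Or.inr rfl⟩
  have hBopen : ∀ n, IsOpen (B n) := by
    intro n
    have : B n ∈ b ∪ {∅} := hBrange ▸ ⟨n, rfl⟩
    rcases this with h1 | h2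
    · exact hb.isOpen h1
    · simp only [mem_singleton_iff] at h2; rw [h2]; exact isOpen_empty
  -- T0 + basis gives injectivity of the basis-membership map
  have einj : ∀ a c : X, (∀ n, a ∈ B n ↔ c ∈ B n) → a = c := by
    intro a c hac
    refine Inseparable.eq ?_
    rw [inseparable_iff_forall_isOpen]
    have key : ∀ (x y : X), (∀ n, x ∈ B n ↔ y ∈ B n) → ∀ s, IsOpen s → x ∈ s → y ∈ s := by
      intro x y hxy s hsO hxs
      obtain ⟨t, htb, hxt, hts⟩ := hb.exists_subset_of_mem_open hxs hsO
      have : t ∈ b ∪ {∅} := Or.inl htb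
      rw [hBrange] at this
      obtain ⟨n, rfl⟩ := this
      exact hts ((hxy n).mp hxt)
    intro s hsO
    exact ⟨key a c hac s hsO, key c a (fun n => (hac n).symm) s hsO⟩
  -- extend the coordinates of f to open sets of X
  have hU : ∀ i : I, ∃ U : Set X, IsOpen U ∧ ∀ y : Y, ((f y : I → Prop) i ↔ (y : X) ∈ U) := by
    intro i
    have hc : Continuous fun y : Y => (f y : I → Prop) i :=
      (continuous_apply i).comp (continuous_subtype_val.comp f.continuous)
    have ho : IsOpen {y : Y | (f y : I → Prop) i} := isOpen_iff_continuous_mem.mpr hc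
    obtain ⟨U, hUo, hUeq⟩ := isOpen_induced_iff.mp ho
    exact ⟨U, hUo, fun y => by
      constructor
      · intro hy; have : y ∈ Subtype.val ⁻¹' U := hUeq ▸ hy; exact this
      · intro hy; have : y ∈ {y : Y | (f y : I → Prop) i} := hUeq ▸ (hy : y ∈ Subtype.val ⁻¹' U)
        exact this⟩
  choose U hUopen hUspec using hU
  set F : X → I → Prop := fun x i => x ∈ U i with hF
  have hFY : ∀ y : Y, F (y : X) = (f y : I → Prop) := by
    intro y; funext i; exact propext (hUspec i y).symm
  have hFcont : Continuous F :=
    continuous_pi fun i => isOpen_iff_continuous_mem.mp (hUopen i)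
  -- extend the coordinates of e ∘ f.symm to open sets of 𝕊^I
  have hW : ∀ n : ℕ, ∃ W : Set (I → Prop), IsOpen W ∧
      ∀ z : s, ((f.symm z : X) ∈ B n ↔ (z : I → Prop) ∈ W) := by
    intro n
    have hc : Continuous fun z : s => ((f.symm z : X) ∈ B n) :=
      (isOpen_iff_continuous_mem.mp (hBopen n)).comp
        (continuous_subtype_val.comp f.symm.continuous)
    have ho : IsOpen {z : s | (f.symm z : X) ∈ B n} := isOpen_iff_continuous_mem.mpr hc
    obtain ⟨W, hWo, hWeq⟩ := isOpen_induced_iff.mp ho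
    exact ⟨W, hWo, fun z => by
      constructor
      · intro hz; have : z ∈ Subtype.val ⁻¹' W := hWeq ▸ (hz : z ∈ {z : s | (f.symm z : X) ∈ B n})
        exact this
      · intro hz; have : z ∈ {z : s | (f.symm z : X) ∈ B n} :=
          hWeq ▸ (hz : z ∈ Subtype.val ⁻¹' W)
        exact this⟩
  choose W hWopen hWspec using hW
  -- the key identity
  have key : Y = (⋂ n, (F ⁻¹' (A n))ᶜ ∪ F ⁻¹' (C n)) ∩
      ((⋂ n, (F ⁻¹' (W n))ᶜ ∪ B n) ∩ (⋂ n, (B n)ᶜ ∪ F ⁻¹' (W n))) := by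
    ext x
    constructor
    · intro hx
      set y : Y := ⟨x, hx⟩ with hy
      have hfs : F x ∈ s := by
        have : F x = (f y : I → Prop) := hFY y
        rw [this]; exact (f y).2
      have hiff : ∀ n, F x ∈ W n ↔ x ∈ B n := by
        intro n
        have h1 := hWspec n (f y)
        rw [Homeomorph.symm_apply_apply] at h1
        rw [hFY y]
        exact h1.symm
      rw [hsEq] at hfs
      refine ⟨?_, ?_, ?_⟩
      · simpa [mem_iInter, mem_preimage] using hfs
      · intro S hS
        simp only [mem_range] at hS
        obtain ⟨n, rfl⟩ := hS
        rcases Classical.em (F x ∈ W n) with h1 | h1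
        · exact Or.inr ((hiff n).mp h1)
        · exact Or.inl h1
      · intro S hS
        simp only [mem_range] at hS
        obtain ⟨n, rfl⟩ := hS
        rcases Classical.em (x ∈ B n) with h1 | h1
        · exact Or.inr ((hiff n).mpr h1)
        · exact Or.inl h1
    · rintro ⟨h1, h2, h3⟩
      have hfs : F x ∈ s := by
        rw [hsEq, mem_iInter]
        intro n
        have := mem_iInter.mp h1 n
        simpa [mem_preimage] using this
      set z : s := ⟨F x, hfs⟩ with hz
      have hiff : ∀ n, (f.symm z : X) ∈ B n ↔ x ∈ B n := by
        intro n
        have hw := hWspec n z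
        have h2n := mem_iInter.mp h2 n
        have h3n := mem_iInter.mp h3 n
        constructor
        · intro hmem
          have : F x ∈ W n := hw.mp hmem
          rcases h2n with ha | ha
          · exact absurd this ha
          · exact ha
        · intro hmem
          rcases h3n with ha | ha
          · exact absurd hmem ha
          · exact hw.mpr ha
      have : (f.symm z : X) = x := einj _ _ hiff
      rw [← this]
      exact (f.symm z).2
  rw [key]
  have p1 : IsPi02 (⋂ n, (F ⁻¹' (A n))ᶜ ∪ F ⁻¹' (C n)) :=
    ⟨fun n => F ⁻¹' (A n), fun n => F ⁻¹' (C n),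
      fun n => (hA n).preimage hFcont, fun n => (hC n).preimage hFcont, rfl⟩
  have p2 : IsPi02 (⋂ n, (F ⁻¹' (W n))ᶜ ∪ B n) :=
    ⟨fun n => F ⁻¹' (W n), B, fun n => (hWopen n).preimage hFcont, hBopen, rfl⟩
  have p3 : IsPi02 (⋂ n, (B n)ᶜ ∪ F ⁻¹' (W n)) :=
    ⟨B, fun n => F ⁻¹' (W n), hBopen, fun n => (hWopen n).preimage hFcont, rfl⟩
  exact p1.inter' (p2.inter' p3)
end

section
/- Every Polish space is quasi-Polish, i.e., homeomorphic to a Π⁰₂ subspace of 𝕊^ℕ. -/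
/-!
A Polish space carries a complete metric with a dense sequence `u`. The balls
`ball (u i) (1 / (m + 1))` form a countable basis, so sending `x` to the set of these balls that
contain it embeds the space into the Sierpiński cube `ℕ × ℕ → Prop ≃ₜ ℕ → Prop`. The image is cut
out by countably many implications between open conditions, and completeness is what makes them
sufficient: in a code, balls of radius `1 / (k + 1)` chosen for each `k` have Cauchy centres,
whose limit is the coded point.
-/

open TopologicalSpace Set Topology

open Filter Metric

section SierpinskiCube

theorem isOpen_setOf_apply {ι : Type*} (i : ι) : IsOpen {α : ι → Prop | α i} :=
  continuous_Prop.1 (continuous_apply i)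

theorem isInducing_mem_of_eq_generateFrom {X ι : Type*} [t : TopologicalSpace X] {B : ι → Set X}
    (h : t = generateFrom (range B)) : IsInducing fun x i => x ∈ B i := by
  have hcont : Continuous fun x i => x ∈ B i :=
    continuous_pi fun i => continuous_Prop.2 (h ▸ isOpen_generateFrom_of_mem ⟨i, rfl⟩)
  refine ⟨le_antisymm (continuous_iff_le_induced.1 hcont) ?_⟩
  conv_rhs => rw [h]
  exact le_generateFrom <| forall_mem_range.2 fun i =>
    isOpen_induced_iff.2 ⟨_, isOpen_setOf_apply i, rfl⟩

end SierpinskiCube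

section Pi02

variable {X Y : Type*} [TopologicalSpace X] [TopologicalSpace Y]

theorem isPi02_iInter_compl_union {ι : Type*} [Countable ι] {U V : ι → Set X}
    (hU : ∀ i, IsOpen (U i)) (hV : ∀ i, IsOpen (V i)) : IsPi02 (⋂ i, ((U i)ᶜ ∪ V i)) := by
  rcases isEmpty_or_nonempty ι with hι | hι
  · exact ⟨fun _ => ∅, fun _ => ∅, fun _ => isOpen_empty, fun _ => isOpen_empty, by simp⟩
  · obtain ⟨f, hf⟩ := exists_surjective_nat ι
    exact ⟨U ∘ f, V ∘ f, fun n => hU (f n), fun n => hV (f n),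
      (hf.iInter_comp fun i => (U i)ᶜ ∪ V i).symm⟩

theorem isPi02_setOf_imp {P Q : X → Prop} (hP : IsOpen {x | P x}) (hQ : IsOpen {x | Q x}) :
    IsPi02 {x | P x → Q x} :=
  ⟨fun _ => {x | P x}, fun _ => {x | Q x}, fun _ => hP, fun _ => hQ, by
    ext x; simp [imp_iff_not_or]⟩

theorem IsOpen.isPi02 {s : Set X} (hs : IsOpen s) : IsPi02 s :=
  ⟨fun _ => univ, fun _ => s, fun _ => isOpen_univ, fun _ => hs, by simp [iInter_const]⟩

namespace IsPi02

theorem iInter {ι : Type*} [Countable ι] {s : ι → Set X} (hs : ∀ i, IsPi02 (s i)) :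
    IsPi02 (⋂ i, s i) := by
  choose U V hU hV hs using hs
  have hprod : ⋂ i, s i = ⋂ p : ι × ℕ, ((U p.1 p.2)ᶜ ∪ V p.1 p.2) := by
    ext x; simp [hs]
  rw [hprod]
  exact isPi02_iInter_compl_union (fun p => hU p.1 p.2) (fun p => hV p.1 p.2)

theorem inter {s t : Set X} (hs : IsPi02 s) (ht : IsPi02 t) : IsPi02 (s ∩ t) := by
  rw [inter_eq_iInter]
  exact iInter (Bool.forall_bool.2 ⟨ht, hs⟩)

theorem preimage {f : X → Y} (hf : Continuous f) {s : Set Y} (hs : IsPi02 s) :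
    IsPi02 (f ⁻¹' s) := by
  obtain ⟨U, V, hU, hV, rfl⟩ := hs
  simp only [preimage_iInter, preimage_union, preimage_compl]
  exact isPi02_iInter_compl_union (fun n => (hU n).preimage hf) (fun n => (hV n).preimage hf)

end IsPi02

theorem QuasiPolish.of_isEmbedding {ι : Type*} [Countable ι] [Infinite ι] {f : X → ι → Prop}
    (hf : IsEmbedding f) (hs : IsPi02 (range f)) : QuasiPolish X := by
  obtain ⟨e⟩ := nonempty_equiv_of_countable (α := ι) (β := ℕ)
  let π : (ι → Prop) ≃ₜ (ℕ → Prop) := Homeomorph.piCongrLeft (Y := fun _ => Prop) e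
  refine ⟨range (π ∘ f), ?_, ⟨(π.isEmbedding.comp hf).toHomeomorph⟩⟩
  rw [range_comp, π.image_eq_preimage_symm]
  exact hs.preimage π.symm.continuous

end Pi02

namespace QuasiPolish

noncomputable def rad (m : ℕ) : ℝ := 1 / (m + 1)

theorem rad_pos (m : ℕ) : 0 < rad m := Nat.one_div_pos_of_nat

theorem tendsto_rad : Tendsto rad atTop (𝓝 0) := tendsto_one_div_add_atTop_nhds_zero_nat

theorem exists_rad_lt {ε : ℝ} (hε : 0 < ε) : ∃ m, rad m < ε := exists_nat_one_div_lt hε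

variable {X : Type*} [MetricSpace X] {u : ℕ → X}

def denseBall (u : ℕ → X) (p : ℕ × ℕ) : Set X := ball (u p.1) (rad p.2)

theorem isTopologicalBasis_range_denseBall (hu : DenseRange u) :
    IsTopologicalBasis (range (denseBall u)) := by
  refine isTopologicalBasis_of_isOpen_of_nhds (forall_mem_range.2 fun _ => isOpen_ball) ?_
  intro x s hx hs
  obtain ⟨ε, hε, hball⟩ := isOpen_iff.1 hs x hx
  obtain ⟨m, hm⟩ := exists_rad_lt (half_pos hε)
  obtain ⟨i, hi⟩ := hu.exists_dist_lt x (rad_pos m)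
  refine ⟨_, mem_range_self (i, m), hi, fun y hy => hball ?_⟩
  calc dist y x ≤ dist y (u i) + dist x (u i) := dist_triangle_right _ _ _
    _ < rad m + rad m := add_lt_add hy hi
    _ < ε := by linarith

/-- `α (i, m)` stands for "the point lies in `denseBall u (i, m)`". The codes of points are those
in which balls of every radius occur, any two occurring balls meet, each occurring ball contains
an occurring ball well inside it, and occurring balls are closed under enlargement. -/
def ballCodes (u : ℕ → X) : Set (ℕ × ℕ → Prop) :=
  {α | (∀ m, ∃ i, α (i, m)) ∧
    (∀ i m j n, α (i, m) ∧ α (j, n) → dist (u i) (u j) < rad m + rad n) ∧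
    (∀ i m, α (i, m) → ∃ j n, dist (u i) (u j) + rad n < rad m ∧ α (j, n)) ∧
    (∀ i m j n, dist (u i) (u j) + rad n < rad m ∧ α (j, n) → α (i, m))}

theorem isPi02_ballCodes (u : ℕ → X) : IsPi02 (ballCodes u) := by
  simp only [ballCodes, ofPred_and, ofPred_forall, ofPred_exists]
  refine .inter (.iInter fun m => (isOpen_iUnion fun i => isOpen_setOf_apply _).isPi02)
    (.inter ?_ (.inter ?_ ?_))
  · exact .iInter fun i => .iInter fun m => .iInter fun j => .iInter fun n =>
      isPi02_setOf_imp ((isOpen_setOf_apply _).inter (isOpen_setOf_apply _)) isOpen_const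
  · refine .iInter fun i => .iInter fun m => isPi02_setOf_imp (isOpen_setOf_apply _) ?_
    simp only [ofPred_exists, ofPred_and]
    exact isOpen_iUnion fun j => isOpen_iUnion fun n => isOpen_const.inter (isOpen_setOf_apply _)
  · exact .iInter fun i => .iInter fun m => .iInter fun j => .iInter fun n =>
      isPi02_setOf_imp (isOpen_const.inter (isOpen_setOf_apply _)) (isOpen_setOf_apply _)

theorem mem_ballCodes (hu : DenseRange u) (x : X) : (fun p => x ∈ denseBall u p) ∈ ballCodes u := by
  refine ⟨fun m => hu.exists_dist_lt x (rad_pos m), ?_, ?_, ?_⟩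
  · rintro i m j n ⟨hi, hj⟩
    calc dist (u i) (u j) ≤ dist x (u i) + dist x (u j) := dist_triangle_left _ _ _
      _ < rad m + rad n := add_lt_add hi hj
  · intro i m (hi : dist x (u i) < rad m)
    obtain ⟨n, hn⟩ := exists_rad_lt (half_pos (sub_pos.2 hi))
    obtain ⟨j, hj⟩ := hu.exists_dist_lt x (rad_pos n)
    refine ⟨j, n, ?_, hj⟩
    have := dist_triangle_left (u i) (u j) x
    linarith
  · rintro i m j n ⟨hij, (hj : dist x (u j) < rad n)⟩
    show dist x (u i) < rad m
    have := dist_triangle_right x (u i) (u j)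
    linarith

section Complete

variable {α : ℕ × ℕ → Prop} {c : ℕ → ℕ}

theorem cauchySeq_of_mem_ballCodes (hα : α ∈ ballCodes u) (hc : ∀ k, α (c k, k)) :
    CauchySeq (u ∘ c) := by
  refine Metric.cauchySeq_iff.2 fun ε hε => ?_
  obtain ⟨N, hN⟩ := ((tendsto_order.1 tendsto_rad).2 _ (half_pos hε)).exists_forall_of_atTop
  refine ⟨N, fun k hk l hl => ?_⟩
  have hkl := hα.2.1 _ _ _ _ ⟨hc k, hc l⟩
  have hk' := hN k hk
  have hl' := hN l hl
  simp only [Function.comp_apply]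
  linarith

theorem dist_le_rad_of_tendsto (hα : α ∈ ballCodes u) (hc : ∀ k, α (c k, k)) {x : X}
    (hx : Tendsto (u ∘ c) atTop (𝓝 x)) {i m : ℕ} (him : α (i, m)) : dist x (u i) ≤ rad m := by
  have hdist : Tendsto (fun k => dist (u (c k)) (u i)) atTop (𝓝 (dist x (u i))) :=
    hx.dist tendsto_const_nhds
  have hrad : Tendsto (fun k => rad k + rad m) atTop (𝓝 (rad m)) := by
    simpa using tendsto_rad.add_const (rad m)
  exact le_of_tendsto_of_tendsto hdist hrad
    (.of_forall fun k => (hα.2.1 _ _ _ _ ⟨hc k, him⟩).le)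

theorem ballCodes_subset_range [CompleteSpace X] :
    ballCodes u ⊆ range fun x p => x ∈ denseBall u p := by
  intro α hα
  choose c hc using hα.1
  obtain ⟨x, hx⟩ := cauchySeq_tendsto_of_complete (cauchySeq_of_mem_ballCodes hα hc)
  refine ⟨x, funext fun ⟨i, m⟩ => propext ⟨fun (hi : dist x (u i) < rad m) => ?_, fun him => ?_⟩⟩
  · obtain ⟨k, hk⟩ := exists_rad_lt (half_pos (sub_pos.2 hi))
    refine hα.2.2.2 i m (c k) k ⟨?_, hc k⟩
    have := dist_le_rad_of_tendsto hα hc hx (hc k)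
    have := dist_triangle_left (u i) (u (c k)) x
    linarith
  · obtain ⟨j, n, hij, hjn⟩ := hα.2.2.1 i m him
    show dist x (u i) < rad m
    have := dist_le_rad_of_tendsto hα hc hx hjn
    have := dist_triangle_right x (u i) (u j)
    linarith

end Complete

theorem range_mem_denseBall [CompleteSpace X] (hu : DenseRange u) :
    range (fun x p => x ∈ denseBall u p) = ballCodes u :=
  (range_subset_iff.2 (mem_ballCodes hu)).antisymm ballCodes_subset_range

end QuasiPolish

theorem polish_quasiPolish {X : Type*} [TopologicalSpace X] [PolishSpace X] :
    QuasiPolish X := by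
  let := upgradeIsCompletelyMetrizable X
  rcases isEmpty_or_nonempty X with hX | hX
  · exact ⟨∅, isOpen_empty.isPi02, ⟨.empty⟩⟩
  obtain ⟨u, hu⟩ := exists_dense_seq X
  have hbasis := QuasiPolish.isTopologicalBasis_range_denseBall hu
  refine .of_isEmbedding (isInducing_mem_of_eq_generateFrom hbasis.eq_generateFrom).isEmbedding ?_
  rw [QuasiPolish.range_mem_denseBall hu]
  exact QuasiPolish.isPi02_ballCodes u
end
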